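/- arXiv:2209.09495 — 5 statements merged into one kernel-verified Lean document; each statement's English description precedes it below -/
import Mathlib

section
/- For all s, t in the interval (0,1), s*t + t*sqrt(1 - s^2) + sqrt(1 - t^2) ≤ sqrt(3). -/
theorem stmt_4 (s t : ℝ) (hs : s ∈ Set.Ioo (0 : ℝ) 1) (ht : t ∈ Set.Ioo (0 : ℝ) 1) :
    s * t + t * Real.sqrt (1 - s ^ 2) + Real.sqrt (1 - t ^ 2) ≤ Real.sqrt 3 := by
  obtain ⟨hs0, hs1⟩ := hs
  obtain ⟨ht0, ht1⟩ := ht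
  set u := Real.sqrt (1 - s ^ 2) with hu
  set v := Real.sqrt (1 - t ^ 2) with hv
  set w := Real.sqrt 3 with hw
  have hu0 : 0 ≤ u := Real.sqrt_nonneg _
  have hv0 : 0 ≤ v := Real.sqrt_nonneg _
  have hw0 : 0 ≤ w := Real.sqrt_nonneg _
  have hu2 : u ^ 2 = 1 - s ^ 2 := Real.sq_sqrt (by nlinarith)
  have hv2 : v ^ 2 = 1 - t ^ 2 := Real.sq_sqrt (by nlinarith)
  have hw2 : w ^ 2 = 3 := Real.sq_sqrt (by norm_num)
  have hX : (s * t + t * u + v) ^ 2 ≤ 3 := by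
    nlinarith [sq_nonneg (s - u), sq_nonneg (t - v * (s + u)), sq_nonneg (s + u)]
  nlinarith [hX, sq_nonneg (w - (s * t + t * u + v)), mul_nonneg (mul_nonneg hs0.le ht0.le) hw0]
end

section
/- Define T_r(w) = w * exp(w^2/2) * ∫_w^∞ t^r * exp(-t^2/2) dt. If 0 ≤ r ≤ 1, then for all w > 0, T_r(w) ≤ w^r. -/
/-!
Since `r ≤ 1`, for `t ≥ w > 0` we have `t ^ r ≤ w ^ (r - 1) * t`, and `t * exp (-t ^ 2 / 2)`
has the explicit antiderivative `-exp (-t ^ 2 / 2)`. Hence the tail integral is at most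
`w ^ (r - 1) * exp (-w ^ 2 / 2)`, and multiplying by `w * exp (w ^ 2 / 2)` gives `w ^ r`.
-/

open Real MeasureTheory Set Filter

lemma hasDerivAt_neg_exp_neg_sq_div_two (x : ℝ) :
    HasDerivAt (fun t : ℝ => -exp (-t ^ 2 / 2)) (x * exp (-x ^ 2 / 2)) x := by
  have h : HasDerivAt (fun t : ℝ => -t ^ 2 / 2) (-(2 * x) / 2) x := by
    simpa using (hasDerivAt_pow 2 x).neg.div_const 2
  exact h.exp.neg.congr_deriv (by ring)

lemma integrable_mul_exp_neg_sq_div_two :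
    Integrable fun t : ℝ => t * exp (-t ^ 2 / 2) := by
  convert integrable_mul_exp_neg_mul_sq (b := 1 / 2) one_half_pos using 4 with t
  ring

lemma integral_Ioi_mul_exp_neg_sq_div_two (w : ℝ) :
    ∫ t in Ioi w, t * exp (-t ^ 2 / 2) = exp (-w ^ 2 / 2) := by
  have hlim : Tendsto (fun t : ℝ => -exp (-t ^ 2 / 2)) atTop (nhds 0) := by
    have h : Tendsto (fun t : ℝ => -t ^ 2 / 2) atTop atBot :=
      (tendsto_neg_atTop_atBot.comp (tendsto_pow_atTop two_ne_zero)).atBot_div_const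
        two_pos
    simpa using (tendsto_exp_atBot.comp h).neg
  rw [integral_Ioi_of_hasDerivAt_of_tendsto' (fun x _ => hasDerivAt_neg_exp_neg_sq_div_two x)
    integrable_mul_exp_neg_sq_div_two.integrableOn hlim]
  ring

lemma rpow_le_rpow_sub_one_mul {r w t : ℝ} (hw : 0 < w) (hwt : w ≤ t) (hr : r ≤ 1) :
    t ^ r ≤ w ^ (r - 1) * t := by
  have ht : 0 < t := hw.trans_le hwt
  calc t ^ r = t ^ (r - 1) * t := by rw [← rpow_add_one ht.ne', sub_add_cancel]
    _ ≤ w ^ (r - 1) * t :=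
      mul_le_mul_of_nonneg_right (rpow_le_rpow_of_nonpos hw hwt (by linarith)) ht.le

lemma setIntegral_Ioi_rpow_mul_exp_neg_sq_div_two_le {r w : ℝ} (hw : 0 < w) (hr : r ≤ 1) :
    ∫ t in Ioi w, t ^ r * exp (-t ^ 2 / 2) ≤ w ^ (r - 1) * exp (-w ^ 2 / 2) := by
  rw [← integral_Ioi_mul_exp_neg_sq_div_two, ← integral_const_mul]
  have hint := (integrable_mul_exp_neg_sq_div_two.const_mul (w ^ (r - 1))).integrableOn (s := Ioi w)
  -- Being nonnegative, the left integrand needs no integrability proof.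
  refine integral_mono_of_nonneg ?_ hint ?_
  · filter_upwards [ae_restrict_mem measurableSet_Ioi] with t ht
    have := hw.trans ht
    positivity
  · filter_upwards [ae_restrict_mem measurableSet_Ioi] with t ht
    rw [← mul_assoc]
    exact mul_le_mul_of_nonneg_right (rpow_le_rpow_sub_one_mul hw ht.le hr)
      (exp_pos _).le

theorem stmt_5_general (r : ℝ) (hr1 : r ≤ 1) (w : ℝ) (hw : 0 < w) :
    w * Real.exp (w ^ 2 / 2) * ∫ t in Set.Ioi w, t ^ r * Real.exp (-t ^ 2 / 2)
      ≤ w ^ r := by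
  calc w * exp (w ^ 2 / 2) * ∫ t in Ioi w, t ^ r * exp (-t ^ 2 / 2)
      ≤ w * exp (w ^ 2 / 2) * (w ^ (r - 1) * exp (-w ^ 2 / 2)) := by
        gcongr
        exact setIntegral_Ioi_rpow_mul_exp_neg_sq_div_two_le hw hr1
    _ = w ^ (r - 1) * w * (exp (w ^ 2 / 2) * exp (-w ^ 2 / 2)) := by ring
    _ = w ^ r := by
        rw [← rpow_add_one hw.ne', sub_add_cancel, neg_div, ← exp_add, add_neg_cancel, exp_zero,
          mul_one]

theorem stmt_5 (r : ℝ) (hr0 : 0 ≤ r) (hr1 : r ≤ 1) (w : ℝ) (hw : 0 < w) :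
    w * Real.exp (w ^ 2 / 2) * ∫ t in Set.Ioi w, t ^ r * Real.exp (-t ^ 2 / 2)
      ≤ w ^ r :=
  stmt_5_general r hr1 w hw
end

section
/- Define T_r(w) = w * exp(w^2/2) * ∫_w^∞ t^r * exp(-t^2/2) dt. If r > 1, then for all w > r - 1, T_r(w) ≤ 2 * w^r. -/
/-!
With `M_s(w) = ∫_w^∞ t^s e^{-t²/2} dt` we have `T_r(w) = w e^{w²/2} M_r(w)`. Integration by parts
gives `M_{a+1}(w) = w^a e^{-w²/2} + a M_{a-1}(w)`, so with `a = r - 1` it suffices to show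
`a M_{a-1}(w) ≤ w^a e^{-w²/2}`. If `2a ≤ w²` this follows from `2a t^{a-1} ≤ t^{a+1}` on `(w, ∞)`;
if `a ≤ min(2, w²)` from `a t^{a-1} ≤ w^a t` and `M_1(w) = e^{-w²/2}`. In the remaining case
`w ≤ 1`, split at `1`: on `(w, 1)` bound `e^{-t²/2}` by `e^{-w²/2}`, beyond `1` bound the integrand
by `e^{2-2t}`, whose integral is `1/2`, and conclude with Bernoulli's inequality `w^{-a} ≤ 2 - w`.
-/

open Real MeasureTheory Set Filter Topology

noncomputable def gaussianTailMoment (s w : ℝ) : ℝ :=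
  ∫ t in Ioi w, t ^ s * exp (-t ^ 2 / 2)

section GaussianTailMoment

variable {s w : ℝ}

lemma isLittleO_rpow_mul_exp_neg_sq_div_two (s : ℝ) :
    (fun t : ℝ => t ^ s * exp (-t ^ 2 / 2)) =o[atTop] fun t => exp (-(1 / 2) * t) := by
  convert rpow_mul_exp_neg_mul_sq_isLittleO_exp_neg one_half_pos s using 4
  ring

lemma integrableOn_rpow_mul_exp_neg_sq_div_two (s : ℝ) (hw : 0 < w) :
    IntegrableOn (fun t : ℝ => t ^ s * exp (-t ^ 2 / 2)) (Ioi w) :=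
  integrable_of_isBigO_exp_neg one_half_pos
    (fun t ht => ((continuousAt_rpow_const t s (Or.inl (hw.trans_le ht).ne')).mul
      (by fun_prop)).continuousWithinAt)
    (isLittleO_rpow_mul_exp_neg_sq_div_two s).isBigO

lemma tendsto_rpow_mul_exp_neg_sq_div_two_atTop (s : ℝ) :
    Tendsto (fun t : ℝ => t ^ s * exp (-t ^ 2 / 2)) atTop (𝓝 0) :=
  (isLittleO_rpow_mul_exp_neg_sq_div_two s).tendsto_zero_of_tendsto <|
    tendsto_exp_atBot.comp (tendsto_id.const_mul_atTop_of_neg (by norm_num))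

lemma hasDerivAt_rpow_mul_exp_neg_sq_div_two (s : ℝ) {t : ℝ} (ht : 0 < t) :
    HasDerivAt (fun t : ℝ => t ^ s * exp (-t ^ 2 / 2))
      (s * (t ^ (s - 1) * exp (-t ^ 2 / 2)) - t ^ (s + 1) * exp (-t ^ 2 / 2)) t := by
  refine ((hasDerivAt_rpow_const (p := s) (Or.inl ht.ne')).mul
    ((hasDerivAt_pow 2 t).neg.div_const 2).exp).congr_deriv ?_
  simp only [Pi.neg_apply, rpow_add_one ht.ne']
  ring

lemma gaussianTailMoment_add_one (s : ℝ) (hw : 0 < w) :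
    gaussianTailMoment (s + 1) w =
      w ^ s * exp (-w ^ 2 / 2) + s * gaussianTailMoment (s - 1) w := by
  have hint := integrableOn_rpow_mul_exp_neg_sq_div_two (s - 1) hw
  have hint' := integrableOn_rpow_mul_exp_neg_sq_div_two (s + 1) hw
  have hftc := integral_Ioi_of_hasDerivAt_of_tendsto'
    (fun t ht => hasDerivAt_rpow_mul_exp_neg_sq_div_two s (hw.trans_le ht))
    ((hint.const_mul s).sub hint') (tendsto_rpow_mul_exp_neg_sq_div_two_atTop s)
  rw [integral_sub (hint.const_mul s) hint', integral_const_mul] at hftc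
  unfold gaussianTailMoment
  linarith

lemma gaussianTailMoment_one (hw : 0 < w) : gaussianTailMoment 1 w = exp (-w ^ 2 / 2) := by
  simpa using gaussianTailMoment_add_one 0 hw

lemma mul_gaussianTailMoment_le_mul {s' c d : ℝ} (hw : 0 < w)
    (h : ∀ t, w < t → c * t ^ s ≤ d * t ^ s') :
    c * gaussianTailMoment s w ≤ d * gaussianTailMoment s' w := by
  unfold gaussianTailMoment
  rw [← integral_const_mul, ← integral_const_mul]
  refine setIntegral_mono_on ((integrableOn_rpow_mul_exp_neg_sq_div_two s hw).const_mul c)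
    ((integrableOn_rpow_mul_exp_neg_sq_div_two s' hw).const_mul d) measurableSet_Ioi
    fun t ht => ?_
  simpa only [mul_assoc] using mul_le_mul_of_nonneg_right (h t ht) (exp_pos (-t ^ 2 / 2)).le

lemma gaussianTailMoment_one_le_half (hs : s ≤ 0) : gaussianTailMoment s 1 ≤ 1 / 2 := by
  have hint : IntegrableOn (fun t : ℝ => exp 2 * exp (-2 * t)) (Ioi 1) :=
    (exp_neg_integrableOn_Ioi 1 two_pos).const_mul _
  calc gaussianTailMoment s 1 ≤ ∫ t in Ioi (1 : ℝ), exp 2 * exp (-2 * t) := by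
        refine setIntegral_mono_on (integrableOn_rpow_mul_exp_neg_sq_div_two s one_pos) hint
          measurableSet_Ioi fun t ht => ?_
        have hpow : t ^ s ≤ 1 := rpow_le_one_of_one_le_of_nonpos ht.out.le hs
        have hexp : exp (-t ^ 2 / 2) ≤ exp 2 * exp (-2 * t) := by
          rw [← exp_add, exp_le_exp]
          nlinarith [sq_nonneg (t - 2)]
        calc t ^ s * exp (-t ^ 2 / 2) ≤ 1 * (exp 2 * exp (-2 * t)) :=
              mul_le_mul hpow hexp (exp_pos _).le zero_le_one
          _ = _ := one_mul _
    _ = 1 / 2 := by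
        rw [integral_const_mul, integral_exp_mul_Ioi (by norm_num), mul_one, mul_div_assoc',
          mul_neg, ← exp_add]
        norm_num

end GaussianTailMoment

lemma inv_two_sub_le_rpow {a w : ℝ} (ha : 0 ≤ a) (haw : a ≤ w) (hw1 : w ≤ 1) (hw : 0 < w) :
    (2 - w)⁻¹ ≤ w ^ a := by
  have hbernoulli : w⁻¹ ^ a ≤ 2 - w :=
    calc w⁻¹ ^ a = (1 + (w⁻¹ - 1)) ^ a := by ring_nf
      _ ≤ 1 + a * (w⁻¹ - 1) :=
        rpow_one_add_le_one_add_mul_self (by linarith [inv_pos.2 hw]) ha (haw.trans hw1)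
      _ ≤ 1 + w * (w⁻¹ - 1) := by gcongr; linarith [one_le_inv₀ hw |>.2 hw1]
      _ = 2 - w := by field_simp; ring
  rw [inv_rpow hw.le] at hbernoulli
  exact inv_le_of_inv_le₀ (rpow_pos_of_pos hw a) hbernoulli

section TailBound

variable {a w : ℝ}

lemma mul_gaussianTailMoment_sub_one_le_of_two_mul_le_sq (hw : 0 < w) (h : 2 * a ≤ w ^ 2) :
    a * gaussianTailMoment (a - 1) w ≤ w ^ a * exp (-w ^ 2 / 2) := by
  have hcmp : 2 * a * gaussianTailMoment (a - 1) w ≤ 1 * gaussianTailMoment (a - 1 + 2) w :=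
    mul_gaussianTailMoment_le_mul hw fun t ht => by
      have ht0 : 0 < t := hw.trans ht
      rw [rpow_add ht0, rpow_two, one_mul, mul_comm _ (t ^ 2)]
      exact mul_le_mul_of_nonneg_right (by nlinarith) (rpow_pos_of_pos ht0 _).le
  rw [show a - 1 + 2 = a + 1 by ring, gaussianTailMoment_add_one a hw] at hcmp
  linarith

lemma mul_gaussianTailMoment_sub_one_le_of_le_sq (ha : 0 ≤ a) (ha2 : a ≤ 2) (hw : 0 < w)
    (h : a ≤ w ^ 2) :
    a * gaussianTailMoment (a - 1) w ≤ w ^ a * exp (-w ^ 2 / 2) := by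
  have hcmp : a * gaussianTailMoment (a - 1) w ≤ w ^ a * gaussianTailMoment 1 w :=
    mul_gaussianTailMoment_le_mul hw fun t ht => by
      have ht0 : 0 < t := hw.trans ht
      have hmono : t ^ (a - 2) ≤ w ^ (a - 2) := rpow_le_rpow_of_nonpos hw ht.le (by linarith)
      have hw2 : a * w ^ (a - 2) ≤ w ^ a := by
        rw [show w ^ a = w ^ (a - 2) * w ^ 2 by rw [← rpow_two, ← rpow_add hw]; ring_nf]
        nlinarith [rpow_pos_of_pos hw (a - 2)]
      calc a * t ^ (a - 1) = a * t ^ (a - 2) * t := by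
            rw [mul_assoc, ← rpow_add_one ht0.ne']; ring_nf
        _ ≤ w ^ a * t := by gcongr; nlinarith
        _ = w ^ a * t ^ (1 : ℝ) := by rw [rpow_one]
  rwa [gaussianTailMoment_one hw] at hcmp

lemma mul_gaussianTailMoment_sub_one_le_of_le_one (ha : 0 < a) (haw : a ≤ w) (hw1 : w ≤ 1) :
    a * gaussianTailMoment (a - 1) w ≤ w ^ a * exp (-w ^ 2 / 2) := by
  have hw : 0 < w := ha.trans_le haw
  set E := exp (-w ^ 2 / 2)
  have hsplit : gaussianTailMoment (a - 1) w =
      (∫ t in w..1, t ^ (a - 1) * exp (-t ^ 2 / 2)) + gaussianTailMoment (a - 1) 1 :=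
    (intervalIntegral.integral_interval_add_Ioi
      (integrableOn_rpow_mul_exp_neg_sq_div_two _ hw)
      (integrableOn_rpow_mul_exp_neg_sq_div_two _ one_pos)).symm
  have hcont : ContinuousOn (fun t : ℝ => t ^ (a - 1)) (uIcc w 1) := fun t ht =>
    (continuousAt_rpow_const t _ (Or.inl (hw.trans_le (by simp_all)).ne'))
      |>.continuousWithinAt
  have hnear : ∫ t in w..1, t ^ (a - 1) * exp (-t ^ 2 / 2) ≤ (1 - w ^ a) / a * E :=
    calc ∫ t in w..1, t ^ (a - 1) * exp (-t ^ 2 / 2) ≤ ∫ t in w..1, t ^ (a - 1) * E := by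
          refine intervalIntegral.integral_mono_on hw1
            (hcont.mul (by fun_prop)).intervalIntegrable
            (hcont.mul continuousOn_const).intervalIntegrable fun t ht => ?_
          exact mul_le_mul_of_nonneg_left (exp_le_exp.2 (by nlinarith [ht.1]))
            (rpow_pos_of_pos (hw.trans_le ht.1) _).le
      _ = (1 - w ^ a) / a * E := by
          rw [intervalIntegral.integral_mul_const, integral_rpow (Or.inl (by linarith)),
            sub_add_cancel, one_rpow]
  have hfar := gaussianTailMoment_one_le_half (s := a - 1) (by linarith)
  have hpow : 1 ≤ (2 - w) * w ^ a :=
    (inv_le_iff_one_le_mul₀' (by linarith)).1 (inv_two_sub_le_rpow ha.le haw hw1 hw)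
  have hE : 1 - w / 2 ≤ E := by
    linarith [add_one_le_exp (-w ^ 2 / 2), mul_le_of_le_one_left hw.le hw1]
  have habsorb : w / 2 ≤ (2 * w ^ a - 1) * E := by
    nlinarith [mul_le_mul_of_nonneg_left hE (show 0 ≤ 2 * w ^ a - 1 by nlinarith)]
  calc a * gaussianTailMoment (a - 1) w
      = a * (∫ t in w..1, t ^ (a - 1) * exp (-t ^ 2 / 2)) + a * gaussianTailMoment (a - 1) 1 := by
        rw [hsplit, mul_add]
    _ ≤ a * ((1 - w ^ a) / a * E) + a * (1 / 2) := by gcongr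
    _ = (1 - w ^ a) * E + a / 2 := by field_simp
    _ ≤ w ^ a * E := by linarith

end TailBound

lemma gaussianTailMoment_le {r w : ℝ} (hr : 1 < r) (hw : r - 1 < w) :
    gaussianTailMoment r w ≤ 2 * w ^ (r - 1) * exp (-w ^ 2 / 2) := by
  have hw0 : 0 < w := by linarith
  have key : (r - 1) * gaussianTailMoment (r - 1 - 1) w ≤ w ^ (r - 1) * exp (-w ^ 2 / 2) := by
    rcases le_or_gt w 1 with hw1 | hw1
    · exact mul_gaussianTailMoment_sub_one_le_of_le_one (by linarith) hw.le hw1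
    rcases le_or_gt (r - 1) 2 with hr2 | hr2
    · exact mul_gaussianTailMoment_sub_one_le_of_le_sq (by linarith) hr2 hw0 (by nlinarith)
    · exact mul_gaussianTailMoment_sub_one_le_of_two_mul_le_sq hw0 (by nlinarith)
  have hibp := gaussianTailMoment_add_one (r - 1) hw0
  rw [sub_add_cancel] at hibp
  linarith

theorem stmt_6 (r : ℝ) (hr : 1 < r) (w : ℝ) (hw : r - 1 < w) :
    w * Real.exp (w ^ 2 / 2) * ∫ t in Set.Ioi w, t ^ r * Real.exp (-t ^ 2 / 2)
      ≤ 2 * w ^ r := by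
  have hw0 : 0 < w := by linarith
  calc w * exp (w ^ 2 / 2) * gaussianTailMoment r w
      ≤ w * exp (w ^ 2 / 2) * (2 * w ^ (r - 1) * exp (-w ^ 2 / 2)) := by
        gcongr
        exact gaussianTailMoment_le hr hw
    _ = 2 * (w ^ (r - 1) * w) * (exp (w ^ 2 / 2) * exp (-w ^ 2 / 2)) := by ring
    _ = 2 * w ^ r := by
        rw [← rpow_add_one hw0.ne', sub_add_cancel, ← exp_add, neg_div, add_neg_cancel, exp_zero,
          mul_one]
end

section
/- For a > 1, B > 1 and x > (B/(B-1)) * (a-1), the upper incomplete gamma function satisfies Γ(a, x) ≤ B * x^(a-1) * e^(-x). -/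
/-!
Since `log t ≤ t - 1`, for `u > x > 0` we have `u ^ p ≤ x ^ p * exp (p * (u / x - 1))`, so the
integrand `u ^ p * exp (-u)` is dominated on `(x, ∞)` by a multiple of `exp (-(1 - p / x) * u)`.
Integrating gives `Γ(p + 1, x) ≤ x / (x - p) * x ^ p * exp (-x)` whenever `0 ≤ p < x`, and the
hypothesis on `x` is exactly `x / (x - (a - 1)) ≤ B`.
-/

open Set MeasureTheory Real

lemma rpow_le_rpow_mul_exp_sub_one {p x u : ℝ} (hp : 0 ≤ p) (hx : 0 < x) (hu : 0 < u) :
    u ^ p ≤ x ^ p * exp (p * (u / x - 1)) := by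
  have hux : 0 < u / x := div_pos hu hx
  calc u ^ p = x ^ p * (u / x) ^ p := by
        rw [← mul_rpow hx.le hux.le, mul_div_cancel₀ _ hx.ne']
    _ ≤ x ^ p * exp (p * (u / x - 1)) := by
        rw [rpow_def_of_pos hux, mul_comm (log _)]
        gcongr
        exact log_le_sub_one_of_pos hux

lemma integral_rpow_mul_exp_neg_Ioi_le {p x : ℝ} (hp : 0 ≤ p) (hpx : p < x) :
    ∫ u in Ioi x, u ^ p * exp (-u) ≤ x / (x - p) * (x ^ p * exp (-x)) := by
  have hx : 0 < x := hp.trans_lt hpx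
  set c := (x - p) / x with hc
  have hc_pos : 0 < c := div_pos (sub_pos.2 hpx) hx
  have hbound : ∀ u ∈ Ioi x, u ^ p * exp (-u) ≤ x ^ p * exp (-p) * exp (-c * u) := by
    intro u hu
    calc u ^ p * exp (-u) ≤ x ^ p * exp (p * (u / x - 1)) * exp (-u) := by
          gcongr
          exact rpow_le_rpow_mul_exp_sub_one hp hx (hx.trans hu)
      _ = x ^ p * exp (-p) * exp (-c * u) := by
          rw [mul_assoc, mul_assoc, ← exp_add, ← exp_add, hc]
          congr 2
          field_simp
          ring
  calc ∫ u in Ioi x, u ^ p * exp (-u)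
      ≤ ∫ u in Ioi x, x ^ p * exp (-p) * exp (-c * u) := by
        refine integral_mono_of_nonneg ?_ ((exp_neg_integrableOn_Ioi x hc_pos).const_mul _) ?_
        · filter_upwards [ae_restrict_mem measurableSet_Ioi] with u hu
          have : 0 < u := hx.trans hu
          positivity
        · filter_upwards [ae_restrict_mem measurableSet_Ioi] with u hu
          exact hbound u hu
    _ = x / (x - p) * (x ^ p * exp (-x)) := by
        rw [integral_const_mul, integral_exp_mul_Ioi (neg_lt_zero.2 hc_pos), hc]
        field_simp
        rw [← exp_add]
        ring_nf

theorem stmt_9 (a B x : ℝ) (ha : 1 < a) (hB : 1 < B) (hx : B / (B - 1) * (a - 1) < x) :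
    (∫ u in Set.Ioi x, u ^ (a - 1) * Real.exp (-u)) ≤ B * x ^ (a - 1) * Real.exp (-x) := by
  have hB1 : 0 < B - 1 := sub_pos.2 hB
  have hpx : B * (a - 1) < (B - 1) * x := by
    rwa [div_mul_eq_mul_div, div_lt_iff₀' hB1] at hx
  have hxp : 0 < x - (a - 1) := by nlinarith
  have hratio : x / (x - (a - 1)) ≤ B := by
    rw [div_le_iff₀ hxp]
    linarith
  calc ∫ u in Ioi x, u ^ (a - 1) * exp (-u)
      ≤ x / (x - (a - 1)) * (x ^ (a - 1) * exp (-x)) :=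
        integral_rpow_mul_exp_neg_Ioi_le (sub_nonneg.2 ha.le) (sub_pos.1 hxp)
    _ ≤ B * x ^ (a - 1) * exp (-x) := by
        rw [mul_assoc]
        have hx0 : 0 < x := by linarith
        gcongr
end

section
/- For every integer n ≥ 1, sqrt(2)/sqrt(n) < Γ(n/2) / Γ((n+1)/2) < sqrt(2)/sqrt(n - 1/2). -/
/-!
Put x = n/2 and r(x) = Γ(x)/Γ(x + 1/2); the claim is 1 < x r(x)² and (x - 1/4) r(x)² < 1.
Both bounds come from log-convexity of Γ in the form Γ(x + 1/2)² ≤ x Γ(x)².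
At x it gives 1 ≤ x r(x)², which becomes strict after passing to x + 1 through
r(x + 1) = x/(x + 1/2) r(x). At x + 1/2 it gives x² r(x)² ≤ x + 1/2, hence
(x - 1/4) r(x)² ≤ 1 + 1/(4x) → 1; since (x - 1/4) r(x)² strictly increases under
x ↦ x + 1, it stays below this limit.
-/

open Real Filter Topology

namespace Real

theorem Gamma_add_half_sq_le {x : ℝ} (hx : 0 < x) : Gamma (x + 1 / 2) ^ 2 ≤ x * Gamma x ^ 2 := by
  have h := Gamma_mul_add_mul_le_rpow_Gamma_mul_rpow_Gamma hx (by linarith : 0 < x + 1)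
    one_half_pos one_half_pos (add_halves 1)
  rw [← sqrt_eq_rpow, ← sqrt_eq_rpow, Gamma_add_one hx.ne',
    show 1 / 2 * x + 1 / 2 * (x + 1) = x + 1 / 2 by ring] at h
  calc Gamma (x + 1 / 2) ^ 2 ≤ (√(Gamma x) * √(x * Gamma x)) ^ 2 :=
        pow_le_pow_left₀ (Gamma_pos_of_pos (by linarith)).le h 2
    _ = x * Gamma x ^ 2 := by
        rw [mul_pow, sq_sqrt (Gamma_pos_of_pos hx).le,
          sq_sqrt (mul_pos hx (Gamma_pos_of_pos hx)).le]
        ring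

end Real

noncomputable def gammaHalfRatio (x : ℝ) : ℝ := Gamma x / Gamma (x + 1 / 2)

theorem gammaHalfRatio_pos {x : ℝ} (hx : 0 < x) : 0 < gammaHalfRatio x :=
  div_pos (Gamma_pos_of_pos hx) (Gamma_pos_of_pos (by linarith))

theorem gammaHalfRatio_add_one {x : ℝ} (hx : 0 < x) :
    gammaHalfRatio (x + 1) = x / (x + 1 / 2) * gammaHalfRatio x := by
  rw [gammaHalfRatio, gammaHalfRatio, Gamma_add_one hx.ne', add_right_comm,
    Gamma_add_one (by linarith : 0 < x + 1 / 2).ne', mul_div_mul_comm]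

theorem one_le_mul_gammaHalfRatio_sq {x : ℝ} (hx : 0 < x) : 1 ≤ x * gammaHalfRatio x ^ 2 := by
  have hΓ : 0 < Gamma (x + 1 / 2) ^ 2 := pow_pos (Gamma_pos_of_pos (by linarith)) 2
  rw [gammaHalfRatio, div_pow, mul_div_assoc', one_le_div hΓ]
  exact Gamma_add_half_sq_le hx

theorem one_lt_mul_gammaHalfRatio_sq {x : ℝ} (hx : 0 < x) : 1 < x * gammaHalfRatio x ^ 2 := by
  have h := one_le_mul_gammaHalfRatio_sq (by linarith : 0 < x + 1)
  rw [gammaHalfRatio_add_one hx, mul_pow, div_pow] at h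
  have hr := pow_pos (gammaHalfRatio_pos hx) 2
  have hx' : 0 < x + 1 / 2 := by linarith
  calc 1 ≤ (x + 1) * (x ^ 2 / (x + 1 / 2) ^ 2 * gammaHalfRatio x ^ 2) := h
    _ < x * gammaHalfRatio x ^ 2 := by
        rw [div_mul_eq_mul_div, mul_div_assoc', div_lt_iff₀ (by positivity)]
        nlinarith

theorem sq_mul_gammaHalfRatio_sq_le {y : ℝ} (hy : 0 < y) :
    y ^ 2 * gammaHalfRatio y ^ 2 ≤ y + 1 / 2 := by
  have h := Gamma_add_half_sq_le (by linarith : 0 < y + 1 / 2)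
  rw [add_assoc, add_halves, Gamma_add_one hy.ne'] at h
  have hΓ : 0 < Gamma (y + 1 / 2) ^ 2 := pow_pos (Gamma_pos_of_pos (by linarith)) 2
  rw [gammaHalfRatio, ← mul_pow, mul_div_assoc', div_pow, div_le_iff₀ hΓ]
  exact h

theorem sub_quarter_mul_gammaHalfRatio_sq_le {y : ℝ} (hy : 0 < y) :
    (y - 1 / 4) * gammaHalfRatio y ^ 2 ≤ 1 + 1 / (4 * y) := by
  have h := sq_mul_gammaHalfRatio_sq_le hy
  have hr := sq_nonneg (gammaHalfRatio y)
  rcases le_or_gt y (1 / 4) with hy' | hy'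
  · have : 0 < 1 + 1 / (4 * y) := by positivity
    nlinarith
  · rw [← sub_nonneg]
    have key : (1 + 1 / (4 * y)) - (y - 1 / 4) * gammaHalfRatio y ^ 2
        = ((y + 1 / 4) * y - (y - 1 / 4) * (y ^ 2 * gammaHalfRatio y ^ 2)) / y ^ 2 := by
      field_simp
    rw [key]
    apply div_nonneg _ (sq_nonneg y)
    nlinarith

theorem sub_quarter_mul_gammaHalfRatio_sq_lt_add_one {x : ℝ} (hx : 0 < x) :
    (x - 1 / 4) * gammaHalfRatio x ^ 2 < (x + 1 - 1 / 4) * gammaHalfRatio (x + 1) ^ 2 := by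
  have hr := pow_pos (gammaHalfRatio_pos hx) 2
  have hx' : 0 < (x + 1 / 2) ^ 2 := by positivity
  rw [gammaHalfRatio_add_one hx, mul_pow, div_pow, ← mul_assoc, ← sub_pos, ← sub_mul]
  apply mul_pos _ hr
  -- `(x + 3/4) x² - (x - 1/4) (x + 1/2)² = 1/16`
  rw [mul_div_assoc', sub_pos, lt_div_iff₀ hx']
  nlinarith

theorem sub_quarter_mul_gammaHalfRatio_sq_lt_one {x : ℝ} (hx : 0 < x) :
    (x - 1 / 4) * gammaHalfRatio x ^ 2 < 1 := by
  set f : ℝ → ℝ := fun y ↦ (y - 1 / 4) * gammaHalfRatio y ^ 2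
  have hmono : Monotone fun k : ℕ ↦ f (x + 1 + k) := by
    refine monotone_nat_of_le_succ fun k ↦ ?_
    rw [Nat.cast_succ, ← add_assoc]
    exact (sub_quarter_mul_gammaHalfRatio_sq_lt_add_one (by positivity)).le
  have hlim : Tendsto (fun k : ℕ ↦ 1 + 1 / (4 * (x + 1 + k))) atTop (𝓝 (1 + 0)) :=
    tendsto_const_nhds.add <| tendsto_const_nhds.div_atTop <|
      (tendsto_atTop_add_const_left _ (x + 1) tendsto_natCast_atTop_atTop).const_mul_atTop
        four_pos
  calc f x < f (x + 1) := sub_quarter_mul_gammaHalfRatio_sq_lt_add_one hx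
    _ ≤ 1 := ge_of_tendsto' (by simpa using hlim) fun k ↦ by
        simpa using (hmono k.zero_le).trans (sub_quarter_mul_gammaHalfRatio_sq_le (by positivity))

theorem stmt_10 (n : ℕ) (hn : 1 ≤ n) :
    Real.sqrt 2 / Real.sqrt n < Real.Gamma (n / 2) / Real.Gamma ((n + 1) / 2) ∧
    Real.Gamma (n / 2) / Real.Gamma ((n + 1) / 2) < Real.sqrt 2 / Real.sqrt (n - 1 / 2) := by
  have hn' : (1 : ℝ) ≤ n := by exact_mod_cast hn
  have hx : (0 : ℝ) < n / 2 := by positivity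
  have hr := gammaHalfRatio_pos hx
  rw [add_div, ← gammaHalfRatio, ← sqrt_div' 2 (by positivity), ← sqrt_div' 2 (by linarith)]
  refine ⟨(sqrt_lt' hr).2 ?_, (lt_sqrt hr.le).2 ?_⟩
  · rw [div_lt_iff₀ (by positivity)]
    linarith [one_lt_mul_gammaHalfRatio_sq hx]
  · rw [lt_div_iff₀ (by linarith)]
    linarith [sub_quarter_mul_gammaHalfRatio_sq_lt_one hx]
end
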